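/- arXiv:1611.00462 — 2 statements merged into one kernel-verified Lean document; each statement's English description precedes it below -/
import Mathlib

section
/- For every real number λ ≥ 0 and every complex number z ∈ ℂ \ (0,∞), one has |λ − z| ≥ √|z| · Im(√z), where √z denotes the branch of the square root with nonnegative imaginary part. -/
/-!
Write `w = a + bi`. For real `l`, a direct expansion gives
`|l - w²|² = |w|² b² + (l - a²)² + 2 l b² + a² b²`,
and for `l ≥ 0` the last three terms are nonnegative. Since `√|z| = |w|` and `Im w ≤ |Im w|`,
the claim follows.
-/

open Complex

theorem normSq_ofReal_sub_sq (l : ℝ) (w : ℂ) :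
    normSq ((l : ℂ) - w ^ 2) = normSq w * w.im ^ 2
      + ((l - w.re ^ 2) ^ 2 + 2 * l * w.im ^ 2 + w.re ^ 2 * w.im ^ 2) := by
  simp only [normSq_apply, sub_re, sub_im, ofReal_re, ofReal_im, pow_two, mul_re, mul_im]
  ring

theorem norm_mul_abs_im_le_norm_ofReal_sub_sq {l : ℝ} (hl : 0 ≤ l) (w : ℂ) :
    ‖w‖ * |w.im| ≤ ‖(l : ℂ) - w ^ 2‖ := by
  refine (pow_le_pow_iff_left₀ (by positivity) (norm_nonneg _) two_ne_zero).mp ?_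
  rw [mul_pow, sq_abs, Complex.sq_norm, Complex.sq_norm, normSq_ofReal_sub_sq]
  exact le_add_of_nonneg_right (by positivity)

theorem stmt_0_general (l : ℝ) (hl : 0 ≤ l) (z : ℂ)
    (w : ℂ) (hw : w ^ 2 = z) :
    Real.sqrt (‖z‖) * w.im ≤ ‖(l : ℂ) - z‖ := by
  subst hw
  rw [norm_pow, Real.sqrt_sq (norm_nonneg w)]
  exact (mul_le_mul_of_nonneg_left (le_abs_self w.im) (norm_nonneg w)).trans
    (norm_mul_abs_im_le_norm_ofReal_sub_sq hl w)

/-- For every real `λ ≥ 0` and every complex `z ∉ (0,∞)`, one has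
`|λ − z| ≥ √|z| · Im √z`, where `√z` is any square root of `z` with
nonnegative imaginary part. -/
theorem stmt_0 (l : ℝ) (hl : 0 ≤ l) (z : ℂ) (hz : ¬ (z.im = 0 ∧ 0 < z.re))
    (w : ℂ) (hw : w ^ 2 = z) (hwim : 0 ≤ w.im) :
    Real.sqrt (‖z‖) * w.im ≤ ‖(l : ℂ) - z‖ :=
  stmt_0_general l hl z w hw
end

section
/- Let (X, μ) be a measure space, 1 ≤ p ≤ r' < ∞ with 1 + 1/q = 1/p + 1/r, and let k be a measurable kernel with M₁ := ess-sup_x ‖k(x,·)‖_r < ∞ and M₂ := ess-sup_y ‖k(·,y)‖_r < ∞. Then for all u ∈ L^p and v ∈ L^{q'}, |∬ v(x) k(x,y) u(y) dμ(x) dμ(y)| ≤ M₁^{r/q' − r/r'} M₂^{r/p − r/r'} ‖v‖_{q'} ‖u‖_p. -/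
/-!
With `1/p + 1/r + 1/s = 2` (here `s = q'`), put `a = 1 - 1/p`, `b = 1 - 1/s`, `c = 1 - 1/r`, so
that `a + b + c = 1` and
`|v x| |k x y| |u y| = (|v x|^s |k x y|^r)^a (|u y|^p |k x y|^r)^b (|v x|^s |u y|^p)^c`.
Hölder's inequality for three functions on the product space, followed by Tonelli and the
bounds on the `L^r` norms of the slices of `k`, gives
`∬ |v k u| ≤ (M₁^r ‖v‖_s^s)^a (M₂^r ‖u‖_p^p)^b (‖v‖_s^s ‖u‖_p^p)^c`,
where `s (a + c) = p (b + c) = 1`, `r a = r/q' - r/r'` and `r b = r/p - r/r'`.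
Tonelli needs s-finite measures, which is arranged by restricting `μ` to σ-finite sets outside
of which `v` and `u` vanish.
-/

open MeasureTheory ENNReal

theorem ENNReal.mul_mul_eq_rpow_mul_rpow_mul_rpow (x y z : ℝ≥0∞) {p r s a b c : ℝ}
    (ha : 0 ≤ a) (hb : 0 ≤ b) (hc : 0 ≤ c)
    (hx : s * (a + c) = 1) (hy : r * (a + b) = 1) (hz : p * (b + c) = 1) :
    x * y * z = (x ^ s * y ^ r) ^ a * (z ^ p * y ^ r) ^ b * (x ^ s * z ^ p) ^ c := by
  have split : ∀ (w : ℝ≥0∞) {t e f : ℝ}, 0 ≤ e → 0 ≤ f → t * (e + f) = 1 →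
      w = w ^ (t * e) * w ^ (t * f) := by
    intro w t e f he hf h
    have ht : 0 ≤ t := by nlinarith
    rw [← rpow_add_of_nonneg _ _ (mul_nonneg ht he) (mul_nonneg ht hf), ← mul_add, h, rpow_one]
  rw [mul_rpow_of_nonneg _ _ ha, mul_rpow_of_nonneg _ _ hb, mul_rpow_of_nonneg _ _ hc,
    ← rpow_mul, ← rpow_mul, ← rpow_mul, ← rpow_mul, ← rpow_mul, ← rpow_mul]
  conv_lhs => rw [split x ha hc hx, split y ha hb hy, split z hb hc hz]
  ring

theorem ENNReal.lintegral_rpow_mul_rpow_mul_rpow_le {α : Type*} [MeasurableSpace α]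
    {μ : Measure α} {f g h : α → ℝ≥0∞} (hf : AEMeasurable f μ) (hg : AEMeasurable g μ)
    (hh : AEMeasurable h μ) {a b c : ℝ} (ha : 0 ≤ a) (hb : 0 ≤ b) (hc : 0 ≤ c)
    (habc : a + b + c = 1) :
    ∫⁻ x, f x ^ a * g x ^ b * h x ^ c ∂μ
      ≤ (∫⁻ x, f x ∂μ) ^ a * (∫⁻ x, g x ∂μ) ^ b * (∫⁻ x, h x ∂μ) ^ c := by
  have := lintegral_prod_norm_pow_le (μ := μ) Finset.univ (f := ![f, g, h]) (p := ![a, b, c])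
    (by simp [Fin.forall_fin_succ, hf, hg, hh]) (by simpa [Fin.sum_univ_three] using habc)
    (by simp [Fin.forall_fin_succ, ha, hb, hc])
  simpa [Fin.prod_univ_three, mul_assoc] using this

theorem lintegral_eq_setLIntegral_of_ae_restrict_compl_eq_zero {α : Type*} [MeasurableSpace α]
    {μ : Measure α} {f : α → ℝ≥0∞} {s : Set α} (hs : MeasurableSet s)
    (hf : f =ᵐ[μ.restrict sᶜ] 0) : ∫⁻ x, f x ∂μ = ∫⁻ x in s, f x ∂μ := by
  rw [← lintegral_add_compl f hs, lintegral_congr_ae hf, Pi.zero_def, lintegral_zero, add_zero]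

theorem lintegral_rpow_enorm_eq_eLpNorm_rpow {α E : Type*} [MeasurableSpace α] {μ : Measure α}
    [NormedAddCommGroup E] {f : α → E} {p : ℝ} (hp : 0 < p) :
    ∫⁻ x, ‖f x‖ₑ ^ p ∂μ = eLpNorm f (ENNReal.ofReal p) μ ^ p := by
  rw [eLpNorm_eq_eLpNorm' (by simpa using hp) ofReal_ne_top, toReal_ofReal hp.le,
    lintegral_rpow_enorm_eq_rpow_eLpNorm' hp]

theorem lintegral_rpow_enorm_le_rpow_of_eLpNorm_le {α E : Type*} [MeasurableSpace α]
    {μ ν : Measure α} [NormedAddCommGroup E] (hνμ : ν ≤ μ) {f : α → E} {p : ℝ} (hp : 0 < p)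
    {M : ℝ≥0∞} (hf : eLpNorm f (ENNReal.ofReal p) μ ≤ M) : ∫⁻ x, ‖f x‖ₑ ^ p ∂ν ≤ M ^ p :=
  calc ∫⁻ x, ‖f x‖ₑ ^ p ∂ν ≤ ∫⁻ x, ‖f x‖ₑ ^ p ∂μ := lintegral_mono' hνμ le_rfl
    _ = eLpNorm f (ENNReal.ofReal p) μ ^ p := lintegral_rpow_enorm_eq_eLpNorm_rpow hp
    _ ≤ M ^ p := by gcongr

section

variable {X Y : Type*} [MeasurableSpace X] [MeasurableSpace Y] {μ : Measure X} {ν : Measure Y}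

theorem lintegral_lintegral_mul_le_of_ae_lintegral_le {f : X → ℝ≥0∞} {g : X → Y → ℝ≥0∞}
    {A : ℝ≥0∞} (hf : AEMeasurable f μ) (hg : ∀ x, Measurable (g x))
    (hA : ∀ᵐ x ∂μ, ∫⁻ y, g x y ∂ν ≤ A) :
    ∫⁻ x, ∫⁻ y, f x * g x y ∂ν ∂μ ≤ A * ∫⁻ x, f x ∂μ :=
  calc ∫⁻ x, ∫⁻ y, f x * g x y ∂ν ∂μ = ∫⁻ x, f x * ∫⁻ y, g x y ∂ν ∂μ :=
        lintegral_congr fun x => lintegral_const_mul _ (hg x)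
    _ ≤ ∫⁻ x, f x * A ∂μ := lintegral_mono_ae (hA.mono fun x hx => by gcongr)
    _ = A * ∫⁻ x, f x ∂μ := by rw [lintegral_mul_const'' _ hf, mul_comm]

theorem lintegral_lintegral_mul_mul_le_of_young_exponents [SFinite μ] [SFinite ν]
    {p r s : ℝ} (hp : 1 ≤ p) (hr : 1 ≤ r) (hs : 1 ≤ s) (hprs : 1 / p + 1 / r + 1 / s = 2)
    {v : X → ℝ≥0∞} {k : X → Y → ℝ≥0∞} {u : Y → ℝ≥0∞}
    (hv : AEMeasurable v μ) (hk : Measurable (Function.uncurry k)) (hu : AEMeasurable u ν)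
    {A B : ℝ≥0∞} (hA : ∀ᵐ x ∂μ, ∫⁻ y, k x y ^ r ∂ν ≤ A)
    (hB : ∀ᵐ y ∂ν, ∫⁻ x, k x y ^ r ∂μ ≤ B) :
    ∫⁻ x, ∫⁻ y, v x * k x y * u y ∂ν ∂μ
      ≤ A ^ (1 - 1 / p) * B ^ (1 - 1 / s) * (∫⁻ x, v x ^ s ∂μ) ^ (1 / s)
          * (∫⁻ y, u y ^ p ∂ν) ^ (1 / p) := by
  set a := 1 - 1 / p
  set b := 1 - 1 / s
  set c := 1 - 1 / r
  have ha : 0 ≤ a := sub_nonneg.2 ((div_le_one (by linarith)).2 hp)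
  have hb : 0 ≤ b := sub_nonneg.2 ((div_le_one (by linarith)).2 hs)
  have hc : 0 ≤ c := sub_nonneg.2 ((div_le_one (by linarith)).2 hr)
  have hac : a + c = 1 / s := by linarith
  have hbc : b + c = 1 / p := by linarith
  have hab : a + b = 1 / r := by linarith
  have hV : AEMeasurable (fun z : X × Y => v z.1 ^ s) (μ.prod ν) := (hv.pow_const s).comp_fst
  have hU : AEMeasurable (fun z : X × Y => u z.2 ^ p) (μ.prod ν) := (hu.pow_const p).comp_snd
  have hK : AEMeasurable (fun z : X × Y => k z.1 z.2 ^ r) (μ.prod ν) :=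
    (hk.pow_const r).aemeasurable
  have hVK : ∫⁻ z, v z.1 ^ s * k z.1 z.2 ^ r ∂(μ.prod ν) ≤ A * ∫⁻ x, v x ^ s ∂μ := by
    rw [lintegral_prod (fun z : X × Y => v z.1 ^ s * k z.1 z.2 ^ r) (hV.mul hK)]
    exact lintegral_lintegral_mul_le_of_ae_lintegral_le (hv.pow_const s)
      (fun x => (hk.comp measurable_prodMk_left).pow_const r) hA
  have hUK : ∫⁻ z, u z.2 ^ p * k z.1 z.2 ^ r ∂(μ.prod ν) ≤ B * ∫⁻ y, u y ^ p ∂ν := by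
    rw [lintegral_prod_symm (fun z : X × Y => u z.2 ^ p * k z.1 z.2 ^ r) (hU.mul hK)]
    exact lintegral_lintegral_mul_le_of_ae_lintegral_le (hu.pow_const p)
      (fun y => (hk.comp measurable_prodMk_right).pow_const r) hB
  have hVU : ∫⁻ z, v z.1 ^ s * u z.2 ^ p ∂(μ.prod ν)
      = (∫⁻ x, v x ^ s ∂μ) * ∫⁻ y, u y ^ p ∂ν :=
    lintegral_prod_mul (hv.pow_const s) (hu.pow_const p)
  calc ∫⁻ x, ∫⁻ y, v x * k x y * u y ∂ν ∂μ
      = ∫⁻ z, (v z.1 ^ s * k z.1 z.2 ^ r) ^ a * (u z.2 ^ p * k z.1 z.2 ^ r) ^ b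
          * (v z.1 ^ s * u z.2 ^ p) ^ c ∂(μ.prod ν) := by
        rw [← lintegral_prod (fun z : X × Y => v z.1 * k z.1 z.2 * u z.2)
          ((hv.comp_fst.mul hk.aemeasurable).mul hu.comp_snd)]
        refine lintegral_congr fun z => ?_
        exact ENNReal.mul_mul_eq_rpow_mul_rpow_mul_rpow _ _ _ ha hb hc
          (by rw [hac]; field_simp) (by rw [hab]; field_simp) (by rw [hbc]; field_simp)
    _ ≤ (∫⁻ z, v z.1 ^ s * k z.1 z.2 ^ r ∂(μ.prod ν)) ^ a
          * (∫⁻ z, u z.2 ^ p * k z.1 z.2 ^ r ∂(μ.prod ν)) ^ b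
          * (∫⁻ z, v z.1 ^ s * u z.2 ^ p ∂(μ.prod ν)) ^ c :=
        ENNReal.lintegral_rpow_mul_rpow_mul_rpow_le (hV.mul hK) (hU.mul hK) (hV.mul hU)
          ha hb hc (by linarith)
    _ ≤ (A * ∫⁻ x, v x ^ s ∂μ) ^ a * (B * ∫⁻ y, u y ^ p ∂ν) ^ b
          * ((∫⁻ x, v x ^ s ∂μ) * ∫⁻ y, u y ^ p ∂ν) ^ c := by
        rw [hVU]; gcongr
    _ = A ^ a * B ^ b * (∫⁻ x, v x ^ s ∂μ) ^ (a + c) * (∫⁻ y, u y ^ p ∂ν) ^ (b + c) := by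
        rw [mul_rpow_of_nonneg _ _ ha, mul_rpow_of_nonneg _ _ hb, mul_rpow_of_nonneg _ _ hc,
          rpow_add_of_nonneg _ _ ha hc, rpow_add_of_nonneg _ _ hb hc]
        ring
    _ = _ := by rw [hac, hbc]


theorem lintegral_lintegral_enorm_mul_mul_le {E F G : Type*} [NormedAddCommGroup E]
    [NormedAddCommGroup F] [NormedAddCommGroup G] [MeasurableSpace G] [OpensMeasurableSpace G]
    {p r s : ℝ} (hp : 1 ≤ p) (hr : 1 ≤ r) (hs : 1 ≤ s) (hprs : 1 / p + 1 / r + 1 / s = 2)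
    {v : X → E} {k : X → Y → G} {u : Y → F} (hv : MemLp v (ENNReal.ofReal s) μ)
    (hk : Measurable (Function.uncurry k)) (hu : MemLp u (ENNReal.ofReal p) ν) {M₁ M₂ : ℝ≥0∞}
    (hM₁ : ∀ᵐ x ∂μ, eLpNorm (k x) (ENNReal.ofReal r) ν ≤ M₁)
    (hM₂ : ∀ᵐ y ∂ν, eLpNorm (fun x => k x y) (ENNReal.ofReal r) μ ≤ M₂) :
    ∫⁻ x, ∫⁻ y, ‖v x‖ₑ * ‖k x y‖ₑ * ‖u y‖ₑ ∂ν ∂μ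
      ≤ M₁ ^ (r * (1 - 1 / p)) * M₂ ^ (r * (1 - 1 / s)) * eLpNorm v (ENNReal.ofReal s) μ
          * eLpNorm u (ENNReal.ofReal p) ν := by
  have hp0 : 0 < p := by linarith
  have hr0 : 0 < r := by linarith
  have hs0 : 0 < s := by linarith
  obtain ⟨S, hS, hvS, hSσ⟩ := (hv.aefinStronglyMeasurable (by simpa using hs0)
    ofReal_ne_top).exists_set_sigmaFinite
  obtain ⟨T, hT, huT, hTσ⟩ := (hu.aefinStronglyMeasurable (by simpa using hp0)
    ofReal_ne_top).exists_set_sigmaFinite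
  have hsupport : ∫⁻ x, ∫⁻ y, ‖v x‖ₑ * ‖k x y‖ₑ * ‖u y‖ₑ ∂ν ∂μ
      = ∫⁻ x in S, ∫⁻ y in T, ‖v x‖ₑ * ‖k x y‖ₑ * ‖u y‖ₑ ∂ν ∂μ := by
    have hinner : ∀ x, ∫⁻ y, ‖v x‖ₑ * ‖k x y‖ₑ * ‖u y‖ₑ ∂ν
        = ∫⁻ y in T, ‖v x‖ₑ * ‖k x y‖ₑ * ‖u y‖ₑ ∂ν := fun x =>
      lintegral_eq_setLIntegral_of_ae_restrict_compl_eq_zero hT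
        (by filter_upwards [huT] with y hy; simp [hy])
    simp_rw [hinner]
    exact lintegral_eq_setLIntegral_of_ae_restrict_compl_eq_zero hS
      (by filter_upwards [hvS] with x hx; simp [hx])
  calc ∫⁻ x, ∫⁻ y, ‖v x‖ₑ * ‖k x y‖ₑ * ‖u y‖ₑ ∂ν ∂μ
      = ∫⁻ x in S, ∫⁻ y in T, ‖v x‖ₑ * ‖k x y‖ₑ * ‖u y‖ₑ ∂ν ∂μ := hsupport
    _ ≤ (M₁ ^ r) ^ (1 - 1 / p) * (M₂ ^ r) ^ (1 - 1 / s)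
          * (∫⁻ x in S, ‖v x‖ₑ ^ s ∂μ) ^ (1 / s) * (∫⁻ y in T, ‖u y‖ₑ ^ p ∂ν) ^ (1 / p) :=
        lintegral_lintegral_mul_mul_le_of_young_exponents hp hr hs hprs
          hv.1.enorm.restrict hk.enorm hu.1.enorm.restrict
          ((ae_restrict_of_ae hM₁).mono fun x hx =>
            lintegral_rpow_enorm_le_rpow_of_eLpNorm_le Measure.restrict_le_self hr0 hx)
          ((ae_restrict_of_ae hM₂).mono fun y hy =>
            lintegral_rpow_enorm_le_rpow_of_eLpNorm_le Measure.restrict_le_self hr0 hy)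
    _ = M₁ ^ (r * (1 - 1 / p)) * M₂ ^ (r * (1 - 1 / s))
          * eLpNorm v (ENNReal.ofReal s) (μ.restrict S)
          * eLpNorm u (ENNReal.ofReal p) (ν.restrict T) := by
        rw [lintegral_rpow_enorm_eq_eLpNorm_rpow hs0, lintegral_rpow_enorm_eq_eLpNorm_rpow hp0,
          one_div s, one_div p, rpow_rpow_inv hs0.ne', rpow_rpow_inv hp0.ne', ← rpow_mul,
          ← rpow_mul]
    _ ≤ _ := by
        gcongr <;> exact Measure.restrict_le_self

theorem enorm_integral_integral_le_lintegral_lintegral_enorm {E : Type*} [NormedAddCommGroup E]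
    [NormedSpace ℝ E] (f : X → Y → E) :
    ‖∫ x, ∫ y, f x y ∂ν ∂μ‖ₑ ≤ ∫⁻ x, ∫⁻ y, ‖f x y‖ₑ ∂ν ∂μ :=
  (enorm_integral_le_lintegral_enorm _).trans
    (lintegral_mono fun _ => enorm_integral_le_lintegral_enorm _)

theorem norm_integral_integral_mul_mul_le {𝕜 : Type*} [RCLike 𝕜]
    {p r s : ℝ} (hp : 1 ≤ p) (hr : 1 ≤ r) (hs : 1 ≤ s) (hprs : 1 / p + 1 / r + 1 / s = 2)
    {v : X → 𝕜} {k : X → Y → 𝕜} {u : Y → 𝕜} (hv : MemLp v (ENNReal.ofReal s) μ)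
    (hk : Measurable (Function.uncurry k)) (hu : MemLp u (ENNReal.ofReal p) ν) {M₁ M₂ : ℝ}
    (hM₁0 : 0 ≤ M₁) (hM₂0 : 0 ≤ M₂)
    (hM₁ : ∀ᵐ x ∂μ, eLpNorm (k x) (ENNReal.ofReal r) ν ≤ ENNReal.ofReal M₁)
    (hM₂ : ∀ᵐ y ∂ν, eLpNorm (fun x => k x y) (ENNReal.ofReal r) μ ≤ ENNReal.ofReal M₂) :
    ‖∫ x, ∫ y, v x * k x y * u y ∂ν ∂μ‖
      ≤ M₁ ^ (r * (1 - 1 / p)) * M₂ ^ (r * (1 - 1 / s))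
          * (eLpNorm v (ENNReal.ofReal s) μ).toReal * (eLpNorm u (ENNReal.ofReal p) ν).toReal := by
  have hbound : ‖∫ x, ∫ y, v x * k x y * u y ∂ν ∂μ‖ₑ
      ≤ ENNReal.ofReal M₁ ^ (r * (1 - 1 / p)) * ENNReal.ofReal M₂ ^ (r * (1 - 1 / s))
          * eLpNorm v (ENNReal.ofReal s) μ * eLpNorm u (ENNReal.ofReal p) ν := by
    refine (enorm_integral_integral_le_lintegral_lintegral_enorm _).trans ?_
    simp only [enorm_mul]
    exact lintegral_lintegral_enorm_mul_mul_le hp hr hs hprs hv hk hu hM₁ hM₂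
  have hfinite : ENNReal.ofReal M₁ ^ (r * (1 - 1 / p)) * ENNReal.ofReal M₂ ^ (r * (1 - 1 / s))
      * eLpNorm v (ENNReal.ofReal s) μ * eLpNorm u (ENNReal.ofReal p) ν ≠ ∞ := by
    have : 0 ≤ r * (1 - 1 / p) := mul_nonneg (by linarith) (by simpa using inv_le_one_of_one_le₀ hp)
    have : 0 ≤ r * (1 - 1 / s) := mul_nonneg (by linarith) (by simpa using inv_le_one_of_one_le₀ hs)
    have := hv.eLpNorm_ne_top
    have := hu.eLpNorm_ne_top
    finiteness
  rw [← toReal_enorm]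
  refine (toReal_mono hfinite hbound).trans_eq ?_
  simp [toReal_mul, ← toReal_rpow, toReal_ofReal hM₁0, toReal_ofReal hM₂0]

end

/-- Generalized Young/Schur inequality with mixed kernel norms: if
`1 ≤ p ≤ r' < ∞` (with `1/r + 1/r' = 1`), `1 + 1/q = 1/p + 1/r`,
`1/q + 1/q' = 1`, and the kernel `k` satisfies
`ess-sup_x ‖k(x,·)‖_r ≤ M₁` and `ess-sup_y ‖k(·,y)‖_r ≤ M₂`, then
`|∬ v(x) k(x,y) u(y)| ≤ M₁^{r/q'−r/r'} M₂^{r/p−r/r'} ‖v‖_{q'} ‖u‖_p`. -/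
theorem stmt_5 {X : Type*} [MeasurableSpace X] (μ : Measure X)
    (p q r r' q' : ℝ) (hp1 : 1 ≤ p) (hpr : p ≤ r') (hr1 : 1 < r)
    (hrr' : 1 / r + 1 / r' = 1) (hqq' : 1 / q + 1 / q' = 1)
    (hq : 1 + 1 / q = 1 / p + 1 / r)
    (k : X → X → ℂ) (hk : Measurable (Function.uncurry k))
    (M₁ M₂ : ℝ) (hM₁0 : 0 ≤ M₁) (hM₂0 : 0 ≤ M₂)
    (hM₁ : ∀ᵐ x ∂μ, eLpNorm (fun y => k x y) (ENNReal.ofReal r) μ ≤ ENNReal.ofReal M₁)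
    (hM₂ : ∀ᵐ y ∂μ, eLpNorm (fun x => k x y) (ENNReal.ofReal r) μ ≤ ENNReal.ofReal M₂)
    (u v : X → ℂ) (hu : MemLp u (ENNReal.ofReal p) μ) (hv : MemLp v (ENNReal.ofReal q') μ) :
    ‖∫ x, ∫ y, v x * k x y * u y ∂μ ∂μ‖
      ≤ M₁ ^ (r / q' - r / r') * M₂ ^ (r / p - r / r')
          * (eLpNorm v (ENNReal.ofReal q') μ).toReal
          * (eLpNorm u (ENNReal.ofReal p) μ).toReal := by
  have hp0 : 0 < p := by linarith
  have hinv_r' : 1 / r' = 1 - 1 / r := by linarith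
  have hinv_q' : 1 / q' = 2 - 1 / p - 1 / r := by linarith
  have hq'0 : 0 < q' := one_div_pos.mp (by
    linarith [(div_le_one hp0).2 hp1, (div_lt_one (by linarith : (0 : ℝ) < r)).2 hr1])
  have hq'1 : 1 ≤ q' := le_of_one_div_le_one_div hq'0 (by
    rw [one_div_one]; linarith [one_div_le_one_div_of_le hp0 hpr])
  have hexp₁ : r / q' - r / r' = r * (1 - 1 / p) := by
    rw [div_eq_mul_one_div r q', div_eq_mul_one_div r r', hinv_q', hinv_r']; ring
  have hexp₂ : r / p - r / r' = r * (1 - 1 / q') := by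
    rw [div_eq_mul_one_div r p, div_eq_mul_one_div r r', hinv_q', hinv_r']; ring
  rw [hexp₁, hexp₂]
  exact norm_integral_integral_mul_mul_le hp1 hr1.le hq'1 (by linarith) hv hk hu hM₁0 hM₂0 hM₁ hM₂
end
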